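/- arXiv:1511.07564 — 7 statements merged into one kernel-verified Lean document; each statement's English description precedes it below -/
import Mathlib

section
/- The two-antenna service amount is strictly decreasing for large antenna separation: if D/2 ≤ L₁ < L₂ then S(L₂) < S(L₁). -/
open MeasureTheory intervalIntegral

/-- The two-antenna service amount `S L = ∫_{−D/(2v)}..(D/(2v)} ln f(t, L) dt`,
where `f t L = 1 + SNR₀/(d₀² + (v t)²) + SNR₀/(d₀² + (L − v t)²)`, is strictly
decreasing for large antenna separation: if `D/2 ≤ L₁ < L₂` then `S L₂ < S L₁`. -/
theorem two_antenna_service_strict_decreasing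
    (SNR₀ d₀ v D : ℝ) (hSNR : 0 < SNR₀) (hd₀ : 0 < d₀) (hv : 0 < v) (hD : 0 < D)
    (f : ℝ → ℝ → ℝ)
    (hf : ∀ t L, f t L =
      1 + SNR₀ / (d₀ ^ 2 + (v * t) ^ 2) + SNR₀ / (d₀ ^ 2 + (L - v * t) ^ 2))
    (S : ℝ → ℝ)
    (hS : ∀ L, S L = ∫ t in (-(D / (2 * v)))..(D / (2 * v)), Real.log (f t L))
    (L₁ L₂ : ℝ) (h₁ : D / 2 ≤ L₁) (h₁₂ : L₁ < L₂) :
    S L₂ < S L₁ := by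
  have hb : (0:ℝ) < D / (2 * v) := by positivity
  have hab : -(D / (2 * v)) < D / (2 * v) := by linarith
  -- denominators positive
  have hden : ∀ x : ℝ, (0:ℝ) < d₀ ^ 2 + x ^ 2 := fun x => by positivity
  have hfpos : ∀ t L, 0 < f t L := by
    intro t L
    rw [hf]
    have h1 : 0 < SNR₀ / (d₀ ^ 2 + (v * t) ^ 2) := div_pos hSNR (hden _)
    have h2 : 0 < SNR₀ / (d₀ ^ 2 + (L - v * t) ^ 2) := div_pos hSNR (hden _)
    linarith
  -- pointwise strict inequality on the interval
  have key : ∀ t ∈ Set.Icc (-(D / (2 * v))) (D / (2 * v)), f t L₂ < f t L₁ := by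
    intro t ht
    have hvt : v * t ≤ D / 2 := by
      have := ht.2
      calc v * t ≤ v * (D / (2 * v)) := by nlinarith
        _ = D / 2 := by field_simp
    have h1 : 0 ≤ L₁ - v * t := by linarith
    have h2 : L₁ - v * t < L₂ - v * t := by linarith
    have hsq : (L₁ - v * t) ^ 2 < (L₂ - v * t) ^ 2 := by nlinarith
    have : SNR₀ / (d₀ ^ 2 + (L₂ - v * t) ^ 2) < SNR₀ / (d₀ ^ 2 + (L₁ - v * t) ^ 2) :=
      div_lt_div_of_pos_left hSNR (hden _) (by linarith)
    rw [hf, hf]; linarith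
  have hlog : ∀ t ∈ Set.Icc (-(D / (2 * v))) (D / (2 * v)),
      Real.log (f t L₂) < Real.log (f t L₁) := fun t ht =>
    Real.log_lt_log (hfpos t L₂) (key t ht)
  have hcont : ∀ L, ContinuousOn (fun t => Real.log (f t L))
      (Set.Icc (-(D / (2 * v))) (D / (2 * v)))  := by
    intro L
    have hfc : Continuous (fun t => f t L) := by
      have : (fun t => f t L) = fun t =>
          1 + SNR₀ / (d₀ ^ 2 + (v * t) ^ 2) + SNR₀ / (d₀ ^ 2 + (L - v * t) ^ 2) := by
        funext t; exact hf t L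
      rw [this]
      exact (continuous_const.add (continuous_const.div (by continuity)
        (fun t => (hden _).ne'))).add (continuous_const.div (by continuity)
        (fun t => (hden _).ne'))
    exact (Real.continuousOn_log.comp hfc.continuousOn
      (fun t _ => (hfpos t L).ne'))
  rw [hS, hS]
  refine integral_lt_integral_of_continuousOn_of_le_of_exists_lt hab (hcont L₂) (hcont L₁)
    (fun x hx => (hlog x ⟨le_of_lt hx.1, hx.2⟩).le) ?_
  exact ⟨0, ⟨by linarith, by linarith⟩, hlog 0 ⟨by linarith, by linarith⟩⟩
end

section
/- The function L ↦ S(L) is continuous on [0, ∞) and attains a global maximum there: there exists L* ∈ [0, ∞) such that S(L) ≤ S(L*) for every L ≥ 0. -/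
open MeasureTheory intervalIntegral Filter

/-- The two-antenna service amount `S L = ∫_{−D/(2v)}^{D/(2v)} ln f(t, L) dt`,
where `f t L = 1 + SNR₀/(d₀² + (v t)²) + SNR₀/(d₀² + (L − v t)²)`, is a
continuous function of `L` on `[0, ∞)` and attains a global maximum there. -/
theorem two_antenna_service_continuous_and_attains_max
    (SNR₀ d₀ v D : ℝ) (hSNR : 0 < SNR₀) (hd₀ : 0 < d₀) (hv : 0 < v) (hD : 0 < D)
    (f : ℝ → ℝ → ℝ)
    (hf : ∀ t L, f t L =
      1 + SNR₀ / (d₀ ^ 2 + (v * t) ^ 2) + SNR₀ / (d₀ ^ 2 + (L - v * t) ^ 2))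
    (S : ℝ → ℝ)
    (hS : ∀ L, S L = ∫ t in (-(D / (2 * v)))..(D / (2 * v)), Real.log (f t L)) :
    ContinuousOn S (Set.Ici (0 : ℝ)) ∧
    ∃ Lstar ∈ Set.Ici (0 : ℝ), ∀ L, 0 ≤ L → S L ≤ S Lstar := by
  set a : ℝ := -(D / (2 * v)) with ha
  set b : ℝ := D / (2 * v) with hb
  have hb0 : 0 < b := by positivity
  have hab : a < b := by simp only [ha]; linarith
  have hden : ∀ x : ℝ, 0 < d₀ ^ 2 + x ^ 2 := fun x => by positivity
  have hf1 : ∀ t L, 1 ≤ f t L := by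
    intro t L
    rw [hf]
    have h1 : 0 ≤ SNR₀ / (d₀ ^ 2 + (v * t) ^ 2) := by positivity
    have h2 : 0 ≤ SNR₀ / (d₀ ^ 2 + (L - v * t) ^ 2) := by positivity
    linarith
  have hfpos : ∀ t L, 0 < f t L := fun t L => lt_of_lt_of_le one_pos (hf1 t L)
  -- joint continuity of f
  have hfc : Continuous (fun p : ℝ × ℝ => f p.2 p.1) := by
    have : (fun p : ℝ × ℝ => f p.2 p.1) = fun p : ℝ × ℝ =>
        1 + SNR₀ / (d₀ ^ 2 + (v * p.2) ^ 2) + SNR₀ / (d₀ ^ 2 + (p.1 - v * p.2) ^ 2) := by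
      funext p; rw [hf]
    rw [this]
    exact ((continuous_const.add
      (continuous_const.div (by fun_prop) fun p => (hden _).ne')).add
      (continuous_const.div (by fun_prop) fun p => (hden _).ne'))
  have hlogc : Continuous (Function.uncurry fun L t : ℝ => Real.log (f t L)) :=
    hfc.log fun p => (hfpos _ _).ne'
  -- continuity of S
  have hScont : Continuous S := by
    have := intervalIntegral.continuous_parametric_intervalIntegral_of_continuous'
      (μ := volume) (f := fun L t => Real.log (f t L)) hlogc a b
    have hSe : S = fun L => ∫ t in a..b, Real.log (f t L) := funext fun L => hS L
    rw [hSe]; exact this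
  refine ⟨hScont.continuousOn, ?_⟩
  -- limit function g and its integral c
  set g : ℝ → ℝ := fun t => Real.log (1 + SNR₀ / (d₀ ^ 2 + (v * t) ^ 2)) with hg
  have hgc : Continuous g := by
    apply Continuous.log
    · exact continuous_const.add (continuous_const.div (by fun_prop) fun t => (hden _).ne')
    · intro t
      have h1 : 0 ≤ SNR₀ / (d₀ ^ 2 + (v * t) ^ 2) := by positivity
      positivity
  set c : ℝ := ∫ t in a..b, g t with hc
  -- uniform bound
  set C : ℝ := 1 + 2 * (SNR₀ / d₀ ^ 2) with hC
  have hfle : ∀ t L, f t L ≤ C := by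
    intro t L
    rw [hf, hC]
    have h1 : SNR₀ / (d₀ ^ 2 + (v * t) ^ 2) ≤ SNR₀ / d₀ ^ 2 := by
      apply div_le_div_of_nonneg_left hSNR.le (by positivity); nlinarith [sq_nonneg (v * t)]
    have h2 : SNR₀ / (d₀ ^ 2 + (L - v * t) ^ 2) ≤ SNR₀ / d₀ ^ 2 := by
      apply div_le_div_of_nonneg_left hSNR.le (by positivity); nlinarith [sq_nonneg (L - v * t)]
    linarith
  -- S tends to c at infinity
  have htend : Tendsto S atTop (nhds c) := by
    have hSe : S = fun L => ∫ t in a..b, Real.log (f t L) := funext fun L => hS L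
    rw [hSe, hc]
    apply intervalIntegral.tendsto_integral_filter_of_dominated_convergence
      (fun _ => Real.log C)
    · filter_upwards with L
      exact ((hlogc.comp (Continuous.prodMk_right L)).aestronglyMeasurable).restrict
    · filter_upwards with L
      filter_upwards with t _
      rw [Real.norm_of_nonneg (Real.log_nonneg (hf1 t L))]
      exact Real.log_le_log (hfpos t L) (hfle t L)
    · exact intervalIntegrable_const
    · filter_upwards with t _
      have h1 : Tendsto (fun L : ℝ => SNR₀ / (d₀ ^ 2 + (L - v * t) ^ 2)) atTop (nhds 0) := by
        apply Tendsto.div_atTop (tendsto_const_nhds)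
        have h2 : Tendsto (fun L : ℝ => L - v * t) atTop atTop :=
          tendsto_atTop_add_const_right _ _ tendsto_id
        have h3 : Tendsto (fun L : ℝ => (L - v * t) ^ 2) atTop atTop :=
          (tendsto_pow_atTop two_ne_zero).comp h2
        exact tendsto_atTop_add_const_left _ _ h3
      have h4 : Tendsto (fun L => f t L) atTop
          (nhds (1 + SNR₀ / (d₀ ^ 2 + (v * t) ^ 2))) := by
        have : (fun L => f t L) = fun L =>
            (1 + SNR₀ / (d₀ ^ 2 + (v * t) ^ 2)) + SNR₀ / (d₀ ^ 2 + (L - v * t) ^ 2) := by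
          funext L; rw [hf]
        rw [this]
        have h5 := (tendsto_const_nhds
          (x := 1 + SNR₀ / (d₀ ^ 2 + (v * t) ^ 2)) (f := atTop)).add h1
        simpa using h5
      have hgpos : (0:ℝ) < 1 + SNR₀ / (d₀ ^ 2 + (v * t) ^ 2) := by
        have : 0 ≤ SNR₀ / (d₀ ^ 2 + (v * t) ^ 2) := by positivity
        linarith
      exact ((Real.continuousAt_log hgpos.ne').tendsto).comp h4
  -- S 0 > c
  have hc_lt : c < S 0 := by
    rw [hS 0, hc]
    have hint1 : IntervalIntegrable g volume a b := hgc.intervalIntegrable a b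
    have hint2 : IntervalIntegrable (fun t => Real.log (f t 0)) volume a b :=
      (hlogc.comp (Continuous.prodMk_right 0)).intervalIntegrable a b
    have key : 0 < ∫ t in a..b, (Real.log (f t 0) - g t) := by
      apply intervalIntegral.intervalIntegral_pos_of_pos_on (hint2.sub hint1) _ hab
      intro t _
      have hlt : 1 + SNR₀ / (d₀ ^ 2 + (v * t) ^ 2) < f t 0 := by
        rw [hf]
        have : 0 < SNR₀ / (d₀ ^ 2 + (0 - v * t) ^ 2) := by positivity
        linarith
      have hgpos : (0:ℝ) < 1 + SNR₀ / (d₀ ^ 2 + (v * t) ^ 2) := by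
        have : 0 ≤ SNR₀ / (d₀ ^ 2 + (v * t) ^ 2) := by positivity
        linarith
      have := Real.log_lt_log hgpos hlt
      simp only [hg]; linarith
    rw [intervalIntegral.integral_sub hint2 hint1] at key
    linarith
  -- eventually S L < S 0
  have hev : ∀ᶠ L in atTop, S L < S 0 :=
    htend.eventually_lt_const hc_lt
  obtain ⟨M, hM⟩ := hev.exists_forall_of_atTop
  set M' : ℝ := max M 0 with hM'
  have hcomp : IsCompact (Set.Icc (0:ℝ) M') := isCompact_Icc
  have hne : (Set.Icc (0:ℝ) M').Nonempty := ⟨0, le_refl 0, le_max_right _ _⟩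
  obtain ⟨Lstar, hLs, hmax⟩ := hcomp.exists_isMaxOn hne (hScont.continuousOn)
  refine ⟨Lstar, hLs.1, ?_⟩
  intro L hL
  by_cases h : L ≤ M'
  · exact hmax ⟨hL, h⟩
  · have hLM : M ≤ L := le_trans (le_max_left _ _) (le_of_lt (not_le.mp h))
    have h0 : S 0 ≤ S Lstar := hmax ⟨le_refl 0, le_max_right _ _⟩
    exact le_trans (hM L hLM).le h0
end

section
/- If L² > 4·d₀²/3, then the midpoint time t = L/(2v) is a strict local minimum of the instantaneous channel capacity C(t) = ln f(t, L): there exists ε > 0 such that C(t) > C(L/(2v)) for all t with 0 < |t − L/(2v)| < ε. -/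
lemma two_antenna_key (SNR₀ d₀ L s : ℝ) (hS : 0 < SNR₀) (hd : 0 < d₀)
    (hs : 0 < s ^ 2) (hs2 : s ^ 2 < 3 * L ^ 2 / 4 - d₀ ^ 2) :
    SNR₀ / (d₀ ^ 2 + (L / 2) ^ 2) + SNR₀ / (d₀ ^ 2 + (L / 2) ^ 2) <
      SNR₀ / (d₀ ^ 2 + (L / 2 + s) ^ 2) + SNR₀ / (d₀ ^ 2 + (L / 2 - s) ^ 2) := by
  have hA : 0 < d₀ ^ 2 + (L / 2 + s) ^ 2 := by positivity
  have hB : 0 < d₀ ^ 2 + (L / 2 - s) ^ 2 := by positivity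
  have hCd : 0 < d₀ ^ 2 + (L / 2) ^ 2 := by positivity
  rw [div_add_div _ _ hCd.ne' hCd.ne', div_add_div _ _ hA.ne' hB.ne',
    div_lt_div_iff₀ (by positivity) (by positivity)]
  nlinarith [sq_nonneg s, sq_nonneg (L/2), mul_pos hA hB, mul_pos hCd hCd,
    mul_pos hS hs, mul_pos (mul_pos hS hs) hs, sq_nonneg (s*L), sq_nonneg (s*s),
    mul_pos (mul_pos hS hs) hCd]

/-- If `L² > 4·d₀²/3`, then the midpoint time `t = L/(2v)` is a strict local
minimum of the instantaneous channel capacity `C t = ln f(t, L)`, where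
`f t L = 1 + SNR₀/(d₀² + (v t)²) + SNR₀/(d₀² + (L − v t)²)`: there is `ε > 0`
such that `C t > C (L/(2v))` whenever `0 < |t − L/(2v)| < ε`. -/
theorem two_antenna_capacity_midpoint_strict_local_min
    (SNR₀ d₀ v L : ℝ) (hSNR : 0 < SNR₀) (hd₀ : 0 < d₀) (hv : 0 < v) (hL : 0 < L)
    (f : ℝ → ℝ → ℝ)
    (hf : ∀ t L', f t L' =
      1 + SNR₀ / (d₀ ^ 2 + (v * t) ^ 2) + SNR₀ / (d₀ ^ 2 + (L' - v * t) ^ 2))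
    (C : ℝ → ℝ) (hC : ∀ t, C t = Real.log (f t L))
    (hL2 : L ^ 2 > 4 * d₀ ^ 2 / 3) :
    ∃ ε > 0, ∀ t : ℝ, 0 < |t - L / (2 * v)| → |t - L / (2 * v)| < ε →
      C t > C (L / (2 * v)) := by
  have hδ : 0 < 3 * L ^ 2 / 4 - d₀ ^ 2 := by nlinarith
  refine ⟨Real.sqrt (3 * L ^ 2 / 4 - d₀ ^ 2) / v, by positivity, ?_⟩
  intro t h1 h2
  have hvm : v * (L / (2 * v)) = L / 2 := by field_simp
  set s : ℝ := v * t - L / 2 with hs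
  have hst : s = v * (t - L / (2 * v)) := by rw [hs, mul_sub, hvm]
  have hsne : s ≠ 0 := by
    rw [hst]
    exact mul_ne_zero hv.ne' (fun h => by simp [h] at h1)
  have hsq : 0 < s ^ 2 := by positivity
  have habs : |s| < Real.sqrt (3 * L ^ 2 / 4 - d₀ ^ 2) := by
    rw [hst, abs_mul, abs_of_pos hv]
    calc v * |t - L / (2 * v)| < v * (Real.sqrt (3 * L ^ 2 / 4 - d₀ ^ 2) / v) :=
          by exact mul_lt_mul_of_pos_left h2 hv
      _ = Real.sqrt (3 * L ^ 2 / 4 - d₀ ^ 2) := mul_div_cancel₀ _ hv.ne'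
  have hsq2 : s ^ 2 < 3 * L ^ 2 / 4 - d₀ ^ 2 := by
    have h3 : |s| ^ 2 < Real.sqrt (3 * L ^ 2 / 4 - d₀ ^ 2) ^ 2 := by
      rw [sq, sq]; exact mul_self_lt_mul_self (abs_nonneg s) habs
    rw [sq_abs, Real.sq_sqrt hδ.le] at h3
    exact h3
  have hvt : v * t = L / 2 + s := by rw [hs]; ring
  have hLvt : L - v * t = L / 2 - s := by rw [hs]; ring
  have key := two_antenna_key SNR₀ d₀ L s hSNR hd₀ hsq hsq2
  rw [hC, hC, hf, hf, hvm, hLvt, hvt]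
  have hm : L - L / 2 = L / 2 := by ring
  rw [hm]
  apply Real.log_lt_log
  · positivity
  · linarith
end

section
/- Root verification for the outage equation: suppose C_th > 0, β = (e^{C_th} − 1)/SNR₀, the inner radicand satisfies β L² − β² L² d₀² + 1 ≥ 0, and Q + Θ ≥ 0 where Q = β(L² − 4 d₀²) and Θ = 4·√(β L² − β² L² d₀² + 1) + 4. Then with Φ = √((Q + Θ)/β), both times T₁ = (L + Φ)/(2v) and T₂ = (L − Φ)/(2v) satisfy f(T, L) = e^{C_th}, i.e. C(T) = C_th. -/
/-! With `a = v T` and `b = L - v T`, the outage equation `f(T, L) = e^{C_th}` reads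
`1/(d₀² + a²) + 1/(d₀² + b²) = β`, i.e. `(d₀² + a²) + (d₀² + b²) = β (d₀² + a²)(d₀² + b²)`.
For `a, b = (L ± Φ)/2` this is a quadratic equation in `Φ²`, and `β Φ² = Q + Θ` is one of its
roots: the square root in `Θ` is exactly the square root of its discriminant. -/

lemma sum_eq_mul_mul_of_outage_root {β d L Φ s : ℝ} (hβ : β ≠ 0)
    (hs : s ^ 2 = β * L ^ 2 - β ^ 2 * L ^ 2 * d ^ 2 + 1)
    (hΦ : β * Φ ^ 2 = β * L ^ 2 - 4 * β * d ^ 2 + 4 * s + 4) :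
    (d ^ 2 + ((L + Φ) / 2) ^ 2) + (d ^ 2 + ((L - Φ) / 2) ^ 2) =
      β * ((d ^ 2 + ((L + Φ) / 2) ^ 2) * (d ^ 2 + ((L - Φ) / 2) ^ 2)) := by
  refine mul_left_cancel₀ hβ ?_
  linear_combination ((-8 * s - (β * Φ ^ 2 - (β * L ^ 2 - 4 * β * d ^ 2 + 4 * s + 4))) / 16) * hΦ
    - hs

lemma div_add_div_eq_mul_of_add_eq_mul {K : Type*} [Field K] {c β D₁ D₂ : K} (h₁ : D₁ ≠ 0) (h₂ : D₂ ≠ 0)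
    (h : D₁ + D₂ = β * (D₁ * D₂)) : c / D₁ + c / D₂ = β * c := by
  field_simp
  linear_combination c * h

lemma mul_div_two_mul_cancel_left {v : ℝ} (hv : v ≠ 0) (x : ℝ) : v * (x / (2 * v)) = x / 2 := by
  field_simp

theorem two_antenna_outage_roots_general
    (SNR₀ d₀ v L : ℝ) (hSNR : 0 < SNR₀) (hd₀ : 0 < d₀) (hv : 0 < v)
    (f : ℝ → ℝ → ℝ)
    (hf : ∀ t L', f t L' =
      1 + SNR₀ / (d₀ ^ 2 + (v * t) ^ 2) + SNR₀ / (d₀ ^ 2 + (L' - v * t) ^ 2))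
    (C : ℝ → ℝ) (hC : ∀ t, C t = Real.log (f t L))
    (Cth β Q Θ Φ : ℝ) (hCth : 0 < Cth)
    (hβ : β = (Real.exp Cth - 1) / SNR₀)
    (hQ : Q = β * (L ^ 2 - 4 * d₀ ^ 2))
    (hΘ : Θ = 4 * Real.sqrt (β * L ^ 2 - β ^ 2 * L ^ 2 * d₀ ^ 2 + 1) + 4)
    (hΦ : Φ = Real.sqrt ((Q + Θ) / β))
    (hrad : 0 ≤ β * L ^ 2 - β ^ 2 * L ^ 2 * d₀ ^ 2 + 1)
    (hQΘ : 0 ≤ Q + Θ) :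
    (f ((L + Φ) / (2 * v)) L = Real.exp Cth ∧ C ((L + Φ) / (2 * v)) = Cth) ∧
    (f ((L - Φ) / (2 * v)) L = Real.exp Cth ∧ C ((L - Φ) / (2 * v)) = Cth) := by
  have hβpos : 0 < β := hβ ▸ div_pos (by simpa using hCth) hSNR
  have hβSNR : β * SNR₀ = Real.exp Cth - 1 := by rw [hβ]; field_simp
  have hΦsq : β * Φ ^ 2 = Q + Θ := by
    rw [hΦ, Real.sq_sqrt (div_nonneg hQΘ hβpos.le), mul_div_cancel₀ _ hβpos.ne']
  have hsum := div_add_div_eq_mul_of_add_eq_mul (c := SNR₀) (by positivity) (by positivity)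
    (sum_eq_mul_mul_of_outage_root hβpos.ne' (Real.sq_sqrt hrad) (by rw [hΦsq, hQ, hΘ]; ring))
  have hf₁ : f ((L + Φ) / (2 * v)) L = Real.exp Cth := by
    rw [hf, mul_div_two_mul_cancel_left hv.ne', show L - (L + Φ) / 2 = (L - Φ) / 2 by ring]
    linarith
  have hf₂ : f ((L - Φ) / (2 * v)) L = Real.exp Cth := by
    rw [hf, mul_div_two_mul_cancel_left hv.ne', show L - (L - Φ) / 2 = (L + Φ) / 2 by ring]
    linarith
  exact ⟨⟨hf₁, by rw [hC, hf₁, Real.log_exp]⟩, ⟨hf₂, by rw [hC, hf₂, Real.log_exp]⟩⟩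

/-- Root verification for the outage equation of the two-antenna system.
With `f t L = 1 + SNR₀/(d₀² + (v t)²) + SNR₀/(d₀² + (L − v t)²)`,
`C t = ln f(t, L)`, `β = (e^{C_th} − 1)/SNR₀`, `Q = β(L² − 4 d₀²)`,
`Θ = 4·√(β L² − β² L² d₀² + 1) + 4` and `Φ = √((Q + Θ)/β)`: if `C_th > 0`,
the inner radicand is nonnegative and `Q + Θ ≥ 0`, then both
`T₁ = (L + Φ)/(2v)` and `T₂ = (L − Φ)/(2v)` satisfy `f(T, L) = e^{C_th}`,
i.e. `C T = C_th`. -/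
theorem two_antenna_outage_roots
    (SNR₀ d₀ v L : ℝ) (hSNR : 0 < SNR₀) (hd₀ : 0 < d₀) (hv : 0 < v) (hL : 0 < L)
    (f : ℝ → ℝ → ℝ)
    (hf : ∀ t L', f t L' =
      1 + SNR₀ / (d₀ ^ 2 + (v * t) ^ 2) + SNR₀ / (d₀ ^ 2 + (L' - v * t) ^ 2))
    (C : ℝ → ℝ) (hC : ∀ t, C t = Real.log (f t L))
    (Cth β Q Θ Φ : ℝ) (hCth : 0 < Cth)
    (hβ : β = (Real.exp Cth - 1) / SNR₀)
    (hQ : Q = β * (L ^ 2 - 4 * d₀ ^ 2))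
    (hΘ : Θ = 4 * Real.sqrt (β * L ^ 2 - β ^ 2 * L ^ 2 * d₀ ^ 2 + 1) + 4)
    (hΦ : Φ = Real.sqrt ((Q + Θ) / β))
    (hrad : 0 ≤ β * L ^ 2 - β ^ 2 * L ^ 2 * d₀ ^ 2 + 1)
    (hQΘ : 0 ≤ Q + Θ) :
    (f ((L + Φ) / (2 * v)) L = Real.exp Cth ∧ C ((L + Φ) / (2 * v)) = Cth) ∧
    (f ((L - Φ) / (2 * v)) L = Real.exp Cth ∧ C ((L - Φ) / (2 * v)) = Cth) :=
  two_antenna_outage_roots_general SNR₀ d₀ v L hSNR hd₀ hv f hf C hC Cth β Q Θ Φ hCth hβ hQ hΘ hΦ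
    hrad hQΘ
end

section
/- Superlevel-set characterization: if 0 < C_th < ln(1 + 2·SNR₀/(d₀² + L²/4)), then β L² − β² L² d₀² + 1 > 0, Q + Θ > 0, and the set of all times t ∈ ℝ at which the instantaneous capacity meets the threshold is exactly the closed interval { t ∈ ℝ : ln f(t, L) ≥ C_th } = [(L − Φ)/(2v), (L + Φ)/(2v)]. -/
/-!
With `β = (e^{C_th} - 1)/SNR₀` and `x = v t`, clearing denominators turns `C_th ≤ ln f(t, L)`
into `β A B ≤ A + B` for `A = d₀² + x²`, `B = d₀² + (L - x)²`. Put
`s = √(β L² - β² L² d₀² + 1)`, `R = Q + Θ` and `y = β (2x - L)²`: then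
`16 β (β A B - (A + B)) = (y + 8s - R) (y - R)`. At the midpoint `x = L/2` (where `y = 0`) the
threshold hypothesis makes this negative, so `(8s - R) R > 0`; as `(8s - R) + R = 8s ≥ 0`, both
`8s - R` and `R` are positive. Hence the first factor is always positive and the condition is
`y ≤ R`, that is `|2 v t - L| ≤ Φ`.
-/

open Real Set

lemma pos_and_pos_of_mul_pos_of_add_nonneg {α : Type*} [Ring α] [LinearOrder α]
    [IsStrictOrderedRing α] {a b : α} (hab : 0 < a * b) (h : 0 ≤ a + b) : 0 < a ∧ 0 < b := by
  rcases pos_and_pos_or_neg_and_neg_of_mul_pos hab with hpos | ⟨ha, hb⟩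
  · exact hpos
  · exact absurd h (not_le.2 (add_neg ha hb))

lemma one_add_mul_le_one_add_div_add_div_iff {c a b β : ℝ} (hc : 0 < c) (ha : 0 < a)
    (hb : 0 < b) : 1 + β * c ≤ 1 + c / a + c / b ↔ β * (a * b) ≤ a + b := by
  rw [add_assoc, add_le_add_iff_left, div_add_div _ _ ha.ne' hb.ne', le_div_iff₀ (by positivity),
    show c * b + a * c = c * (a + b) by ring, show β * c * (a * b) = c * (β * (a * b)) by ring,
    mul_le_mul_iff_right₀ hc]

lemma div_mul_lt_two_of_lt_log_one_add {C c m : ℝ} (hc : 0 < c) (hm : 0 < m)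
    (h : C < log (1 + 2 * c / m)) : (exp C - 1) / c * m < 2 := by
  rw [lt_log_iff_exp_lt (by positivity)] at h
  rw [div_mul_eq_mul_div, div_lt_iff₀ hc, ← lt_div_iff₀ hm]
  linarith

lemma mem_Icc_div_iff {v L Φ t : ℝ} (hv : 0 < v) :
    t ∈ Icc ((L - Φ) / (2 * v)) ((L + Φ) / (2 * v)) ↔
      -Φ ≤ 2 * (v * t) - L ∧ 2 * (v * t) - L ≤ Φ := by
  rw [mem_Icc, div_le_iff₀ (by positivity), le_div_iff₀ (by positivity)]
  constructor <;> rintro ⟨h₁, h₂⟩ <;> constructor <;> linarith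

namespace TwoAntenna

variable {β d₀ L s : ℝ}

lemma radicand_pos (hβ : 0 < β) (hm : β * (d₀ ^ 2 + L ^ 2 / 4) < 2) :
    0 < β * L ^ 2 - β ^ 2 * L ^ 2 * d₀ ^ 2 + 1 := by
  rcases (sq_nonneg L).eq_or_lt with hL | hL
  · simp [← hL]
  · nlinarith [sq_nonneg (β * L ^ 2 / 2 - 1), mul_pos (mul_pos hβ hL) (sub_pos.2 hm)]

lemma capacity_gap_factorization (hs : s ^ 2 = β * L ^ 2 - β ^ 2 * L ^ 2 * d₀ ^ 2 + 1) (x : ℝ) :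
    16 * β * (β * ((d₀ ^ 2 + x ^ 2) * (d₀ ^ 2 + (L - x) ^ 2))
        - ((d₀ ^ 2 + x ^ 2) + (d₀ ^ 2 + (L - x) ^ 2)))
      = (β * (2 * x - L) ^ 2 + (8 * s - (β * (L ^ 2 - 4 * d₀ ^ 2) + (4 * s + 4))))
        * (β * (2 * x - L) ^ 2 - (β * (L ^ 2 - 4 * d₀ ^ 2) + (4 * s + 4))) := by
  linear_combination 16 * hs

lemma root_gaps_pos (hβ : 0 < β) (hd₀ : d₀ ≠ 0) (hm : β * (d₀ ^ 2 + L ^ 2 / 4) < 2)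
    (hs : s ^ 2 = β * L ^ 2 - β ^ 2 * L ^ 2 * d₀ ^ 2 + 1) (hs₀ : 0 ≤ s) :
    0 < 8 * s - (β * (L ^ 2 - 4 * d₀ ^ 2) + (4 * s + 4)) ∧
      0 < β * (L ^ 2 - 4 * d₀ ^ 2) + (4 * s + 4) := by
  have hprod : (8 * s - (β * (L ^ 2 - 4 * d₀ ^ 2) + (4 * s + 4)))
      * (β * (L ^ 2 - 4 * d₀ ^ 2) + (4 * s + 4))
      = 16 * β * (d₀ ^ 2 + L ^ 2 / 4) * (2 - β * (d₀ ^ 2 + L ^ 2 / 4)) := by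
    linear_combination 16 * hs
  refine pos_and_pos_of_mul_pos_of_add_nonneg ?_ (by linarith)
  rw [hprod]
  exact mul_pos (by positivity) (sub_pos.2 hm)

lemma mul_le_add_iff_sq_le (hβ : 0 < β) (hs : s ^ 2 = β * L ^ 2 - β ^ 2 * L ^ 2 * d₀ ^ 2 + 1)
    (hgap : 0 < 8 * s - (β * (L ^ 2 - 4 * d₀ ^ 2) + (4 * s + 4))) (x : ℝ) :
    β * ((d₀ ^ 2 + x ^ 2) * (d₀ ^ 2 + (L - x) ^ 2)) ≤ (d₀ ^ 2 + x ^ 2) + (d₀ ^ 2 + (L - x) ^ 2) ↔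
      β * (2 * x - L) ^ 2 ≤ β * (L ^ 2 - 4 * d₀ ^ 2) + (4 * s + 4) := by
  set A := d₀ ^ 2 + x ^ 2
  set B := d₀ ^ 2 + (L - x) ^ 2
  set y := β * (2 * x - L) ^ 2
  set R := β * (L ^ 2 - 4 * d₀ ^ 2) + (4 * s + 4)
  have hy : 0 < y + (8 * s - R) := add_pos_of_nonneg_of_pos (by positivity) hgap
  calc β * (A * B) ≤ A + B ↔ 16 * β * (β * (A * B) - (A + B)) ≤ 16 * β * 0 := by
        rw [mul_le_mul_iff_right₀ (by positivity), sub_nonpos]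
    _ ↔ (y + (8 * s - R)) * (y - R) ≤ (y + (8 * s - R)) * 0 := by
        rw [capacity_gap_factorization hs, mul_zero, mul_zero]
    _ ↔ y ≤ R := by rw [mul_le_mul_iff_right₀ hy, sub_nonpos]

end TwoAntenna

theorem two_antenna_superlevel_set_general
    (SNR₀ d₀ v L : ℝ) (hSNR : 0 < SNR₀) (hd₀ : 0 < d₀) (hv : 0 < v)
    (f : ℝ → ℝ → ℝ)
    (hf : ∀ t L', f t L' =
      1 + SNR₀ / (d₀ ^ 2 + (v * t) ^ 2) + SNR₀ / (d₀ ^ 2 + (L' - v * t) ^ 2))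
    (Cth β Q Θ Φ : ℝ)
    (hCth₀ : 0 < Cth)
    (hCth₁ : Cth < Real.log (1 + 2 * SNR₀ / (d₀ ^ 2 + L ^ 2 / 4)))
    (hβ : β = (Real.exp Cth - 1) / SNR₀)
    (hQ : Q = β * (L ^ 2 - 4 * d₀ ^ 2))
    (hΘ : Θ = 4 * Real.sqrt (β * L ^ 2 - β ^ 2 * L ^ 2 * d₀ ^ 2 + 1) + 4)
    (hΦ : Φ = Real.sqrt ((Q + Θ) / β)) :
    0 < β * L ^ 2 - β ^ 2 * L ^ 2 * d₀ ^ 2 + 1 ∧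
    0 < Q + Θ ∧
    {t : ℝ | Cth ≤ Real.log (f t L)} =
      Set.Icc ((L - Φ) / (2 * v)) ((L + Φ) / (2 * v)) := by
  have hβ₀ : 0 < β := hβ ▸ div_pos (sub_pos.2 (one_lt_exp_iff.2 hCth₀)) hSNR
  have hm : β * (d₀ ^ 2 + L ^ 2 / 4) < 2 :=
    hβ ▸ div_mul_lt_two_of_lt_log_one_add hSNR (by positivity) hCth₁
  have hexp : exp Cth = 1 + β * SNR₀ := by rw [hβ]; field_simp; ring
  have hrad := TwoAntenna.radicand_pos hβ₀ hm
  set s := √(β * L ^ 2 - β ^ 2 * L ^ 2 * d₀ ^ 2 + 1)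
  have hs : s ^ 2 = β * L ^ 2 - β ^ 2 * L ^ 2 * d₀ ^ 2 + 1 := sq_sqrt hrad.le
  have hQΘ : Q + Θ = β * (L ^ 2 - 4 * d₀ ^ 2) + (4 * s + 4) := by rw [hQ, hΘ]
  obtain ⟨hgap, hR⟩ := TwoAntenna.root_gaps_pos hβ₀ hd₀.ne' hm hs (sqrt_nonneg _)
  rw [← hQΘ] at hR
  refine ⟨hrad, hR, ?_⟩
  ext t
  rw [mem_ofPred_eq, le_log_iff_exp_le (by rw [hf]; positivity), hf, hexp,
    one_add_mul_le_one_add_div_add_div_iff hSNR (by positivity) (by positivity),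
    TwoAntenna.mul_le_add_iff_sq_le hβ₀ hs hgap, ← hQΘ, mul_comm, ← le_div_iff₀ hβ₀,
    Real.sq_le (div_nonneg hR.le hβ₀.le), ← hΦ, mem_Icc_div_iff hv]

/-- Superlevel-set characterization for the two-antenna instantaneous capacity.
With `f t L = 1 + SNR₀/(d₀² + (v t)²) + SNR₀/(d₀² + (L − v t)²)`,
`β = (e^{C_th} − 1)/SNR₀`, `Q = β(L² − 4 d₀²)`,
`Θ = 4·√(β L² − β² L² d₀² + 1) + 4` and `Φ = √((Q + Θ)/β)`: if
`0 < C_th < ln(1 + 2·SNR₀/(d₀² + L²/4))`, then the inner radicand is positive,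
`Q + Θ > 0`, and `{t | ln f(t, L) ≥ C_th} = [(L − Φ)/(2v), (L + Φ)/(2v)]`. -/
theorem two_antenna_superlevel_set
    (SNR₀ d₀ v L : ℝ) (hSNR : 0 < SNR₀) (hd₀ : 0 < d₀) (hv : 0 < v) (hL : 0 < L)
    (f : ℝ → ℝ → ℝ)
    (hf : ∀ t L', f t L' =
      1 + SNR₀ / (d₀ ^ 2 + (v * t) ^ 2) + SNR₀ / (d₀ ^ 2 + (L' - v * t) ^ 2))
    (Cth β Q Θ Φ : ℝ)
    (hCth₀ : 0 < Cth)
    (hCth₁ : Cth < Real.log (1 + 2 * SNR₀ / (d₀ ^ 2 + L ^ 2 / 4)))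
    (hβ : β = (Real.exp Cth - 1) / SNR₀)
    (hQ : Q = β * (L ^ 2 - 4 * d₀ ^ 2))
    (hΘ : Θ = 4 * Real.sqrt (β * L ^ 2 - β ^ 2 * L ^ 2 * d₀ ^ 2 + 1) + 4)
    (hΦ : Φ = Real.sqrt ((Q + Θ) / β)) :
    0 < β * L ^ 2 - β ^ 2 * L ^ 2 * d₀ ^ 2 + 1 ∧
    0 < Q + Θ ∧
    {t : ℝ | Cth ≤ Real.log (f t L)} =
      Set.Icc ((L - Φ) / (2 * v)) ((L + Φ) / (2 * v)) :=
  two_antenna_superlevel_set_general SNR₀ d₀ v L hSNR hd₀ hv f hf Cth β Q Θ Φ hCth₀ hCth₁ hβ hQ hΘ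
    hΦ
end

section
/- Outage time ratio formula (Lemma 2): suppose 0 < C_th < ln(1 + 2·SNR₀/(d₀² + L²/4)) and the two crossing times lie in the observation window, i.e. −D/(2v) ≤ (L − Φ)/(2v) and (L + Φ)/(2v) ≤ D/(2v). Then the Lebesgue measure of the outage set { t ∈ [−D/(2v), D/(2v)] : ln f(t, L) < C_th } equals D/v − Φ/v; equivalently, the outage time ratio P_OTR = (outage measure)/(D/v) equals 1 − √((β L² − 4 β d₀² + 4·√(−β² L² d₀² + β L² + 1) + 4)/β)/D. -/
open MeasureTheory

lemma aux_sq_lt_iff (c w : ℝ) (hc : 0 ≤ c) : c ^ 2 < w ^ 2 ↔ (w < -c ∨ c < w) := by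
  constructor
  · intro h
    by_contra hcon
    push_neg at hcon
    obtain ⟨h1, h2⟩ := hcon
    nlinarith
  · rintro (h | h) <;> nlinarith


set_option maxHeartbeats 1000000 in
/-- Outage time ratio formula (Lemma 2) for the two-antenna system.
With `f t L = 1 + SNR₀/(d₀² + (v t)²) + SNR₀/(d₀² + (L − v t)²)`,
`β = (e^{C_th} − 1)/SNR₀`, `Q = β(L² − 4 d₀²)`,
`Θ = 4·√(β L² − β² L² d₀² + 1) + 4` and `Φ = √((Q + Θ)/β)`: if
`0 < C_th < ln(1 + 2·SNR₀/(d₀² + L²/4))` and the two crossing times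
`(L ∓ Φ)/(2v)` lie in the window `[−D/(2v), D/(2v)]`, then the Lebesgue
measure of the outage set equals `D/v − Φ/v`, and the outage ratio equals
`1 − √((β L² − 4 β d₀² + 4·√(−β² L² d₀² + β L² + 1) + 4)/β)/D`. -/
theorem two_antenna_outage_time_ratio
    (SNR₀ d₀ v D L : ℝ)
    (hSNR : 0 < SNR₀) (hd₀ : 0 < d₀) (hv : 0 < v) (hD : 0 < D) (hL : 0 < L)
    (f : ℝ → ℝ → ℝ)
    (hf : ∀ t L', f t L' =
      1 + SNR₀ / (d₀ ^ 2 + (v * t) ^ 2) + SNR₀ / (d₀ ^ 2 + (L' - v * t) ^ 2))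
    (Cth β Q Θ Φ : ℝ)
    (hCth₀ : 0 < Cth)
    (hCth₁ : Cth < Real.log (1 + 2 * SNR₀ / (d₀ ^ 2 + L ^ 2 / 4)))
    (hβ : β = (Real.exp Cth - 1) / SNR₀)
    (hQ : Q = β * (L ^ 2 - 4 * d₀ ^ 2))
    (hΘ : Θ = 4 * Real.sqrt (β * L ^ 2 - β ^ 2 * L ^ 2 * d₀ ^ 2 + 1) + 4)
    (hΦ : Φ = Real.sqrt ((Q + Θ) / β))
    (hlo : -(D / (2 * v)) ≤ (L - Φ) / (2 * v))
    (hhi : (L + Φ) / (2 * v) ≤ D / (2 * v)) :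
    volume {t ∈ Set.Icc (-(D / (2 * v))) (D / (2 * v)) |
        Real.log (f t L) < Cth} = ENNReal.ofReal (D / v - Φ / v) ∧
    (D / v - Φ / v) / (D / v) =
      1 - Real.sqrt ((β * L ^ 2 - 4 * β * d₀ ^ 2 +
        4 * Real.sqrt (-(β ^ 2) * L ^ 2 * d₀ ^ 2 + β * L ^ 2 + 1) + 4) / β) / D := by
  have hv' : v ≠ 0 := ne_of_gt hv
  have hD' : D ≠ 0 := ne_of_gt hD
  set a : ℝ := d₀ ^ 2 + L ^ 2 / 4 with ha
  have hapos : 0 < a := by positivity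
  clear_value a
  have hE1 : 1 < Real.exp Cth := Real.one_lt_exp_iff.mpr hCth₀
  have hβpos : 0 < β := by rw [hβ]; exact div_pos (by linarith) hSNR
  have hβ' : β ≠ 0 := ne_of_gt hβpos
  -- β * a < 2
  have harg : (0:ℝ) < 1 + 2 * SNR₀ / a := by positivity
  have hE2 : Real.exp Cth < 1 + 2 * SNR₀ / a := by
    have := Real.exp_lt_exp.mpr hCth₁
    rwa [Real.exp_log harg] at this
  have hβa : β * a < 2 := by
    have h1 : Real.exp Cth - 1 < 2 * SNR₀ / a := by linarith
    have h2 : (Real.exp Cth - 1) * a < 2 * SNR₀ := (lt_div_iff₀ hapos).mp h1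
    rw [hβ, div_mul_eq_mul_div, div_lt_iff₀ hSNR]
    linarith
  -- discriminant positivity
  set d' : ℝ := β * L ^ 2 - β ^ 2 * L ^ 2 * d₀ ^ 2 + 1 with hd'
  clear_value d'
  have h2 : (0:ℝ) < 2 - β * a := by linarith
  have hppos : (0:ℝ) < d₀ ^ 2 := by positivity
  have hqpos : (0:ℝ) < L ^ 2 / 4 := by positivity
  have hd'pos : 0 < d' := by
    rcases le_or_gt (d₀ ^ 2) (L ^ 2 / 4) with hpq | hpq
    · have h1 : β * d₀ ^ 2 < 1 := by rw [ha] at h2; nlinarith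
      nlinarith [mul_nonneg (mul_nonneg hβpos.le (sq_nonneg L))
        (by linarith : (0:ℝ) ≤ 1 - β * d₀ ^ 2)]
    · have hid : d' * a ^ 2 = (d₀ ^ 2 - 3 * (L ^ 2 / 4)) ^ 2
          + 4 * β * (L ^ 2 / 4) * d₀ ^ 2 * a * (2 - β * a)
          + 4 * (L ^ 2 / 4) * (d₀ ^ 2 - L ^ 2 / 4) * (2 - β * a) := by
        rw [hd', ha]; ring
      have hpos : 0 < d' * a ^ 2 := by
        rw [hid]
        have t1 : 0 ≤ (d₀ ^ 2 - 3 * (L ^ 2 / 4)) ^ 2 := sq_nonneg _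
        have t2 : 0 < 4 * β * (L ^ 2 / 4) * d₀ ^ 2 * a * (2 - β * a) := by positivity
        have t3 : 0 < 4 * (L ^ 2 / 4) * (d₀ ^ 2 - L ^ 2 / 4) * (2 - β * a) := by
          have : 0 < d₀ ^ 2 - L ^ 2 / 4 := by linarith
          positivity
        linarith
      rcases mul_pos_iff.mp hpos with ⟨h, _⟩ | ⟨_, h⟩
      · exact h
      · exact absurd h (not_lt.mpr (sq_nonneg a))
  set sd : ℝ := Real.sqrt d' with hsd
  clear_value sd
  have hsd2 : sd ^ 2 = d' := by rw [hsd]; exact Real.sq_sqrt hd'pos.le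
  have hsdpos : 0 < sd := by rw [hsd]; exact Real.sqrt_pos.mpr hd'pos
  set c₁ : ℝ := 2 * a * β - β * L ^ 2 - 2 with hc₁
  clear_value c₁
  set c₀ : ℝ := β * a ^ 2 - 2 * a with hc₀
  clear_value c₀
  have hdisc : 4 * d' = c₁ ^ 2 - 4 * β * c₀ := by rw [hd', hc₁, hc₀, ha]; ring
  have hc₀neg : c₀ < 0 := by
    rw [hc₀]; nlinarith [mul_pos hapos h2]
  have hsq : 4 * sd ^ 2 - c₁ ^ 2 = 4 * β * a * (2 - β * a) := by
    rw [hsd2, hdisc, hc₀]; ring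
  have hclt : c₁ < 2 * sd := by
    nlinarith [hsq, hsdpos, mul_pos (mul_pos hβpos hapos) h2]
  have hcgt : -(2 * sd) < c₁ := by
    nlinarith [hsq, hsdpos, mul_pos (mul_pos hβpos hapos) h2]
  set sp : ℝ := (2 * sd - c₁) / (2 * β) with hsp
  clear_value sp
  set sm : ℝ := (-c₁ - 2 * sd) / (2 * β) with hsm
  clear_value sm
  have hsppos : 0 < sp := by
    rw [hsp]; exact div_pos (by linarith) (by linarith)
  have hsmneg : sm < 0 := by
    rw [hsm]; exact div_neg_of_neg_of_pos (by linarith) (by linarith)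
  -- Φ² = 4 sp
  have hQΘ : (Q + Θ) / β = 4 * sp := by
    rw [hQ, hΘ, hsp, hc₁, ha]
    field_simp
    ring
  have hΦnn : 0 ≤ Φ := hΦ ▸ Real.sqrt_nonneg _
  have hΦ2 : Φ ^ 2 = 4 * sp := by
    rw [hΦ, hQΘ, Real.sq_sqrt (by positivity)]
  -- pointwise characterization
  set t₁ : ℝ := (L - Φ) / (2 * v) with ht₁
  clear_value t₁
  set t₂ : ℝ := (L + Φ) / (2 * v) with ht₂
  clear_value t₂
  have h2v : (0:ℝ) < 2 * v := by linarith
  have key : ∀ t : ℝ, Real.log (f t L) < Cth ↔ (t < t₁ ∨ t₂ < t) := by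
    intro t
    have hA : (0:ℝ) < d₀ ^ 2 + (v * t) ^ 2 := by positivity
    have hB : (0:ℝ) < d₀ ^ 2 + (L - v * t) ^ 2 := by positivity
    have hfpos : 0 < f t L := by rw [hf]; positivity
    rw [Real.log_lt_iff_lt_exp hfpos, hf]
    set A : ℝ := d₀ ^ 2 + (v * t) ^ 2 with hA'
    set B : ℝ := d₀ ^ 2 + (L - v * t) ^ 2 with hB'
    have hβS : β * SNR₀ = Real.exp Cth - 1 := by rw [hβ]; field_simp
    have step1 : (1 + SNR₀ / A + SNR₀ / B < Real.exp Cth) ↔ (A + B < β * (A * B)) := by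
      have hSab : SNR₀ / A + SNR₀ / B = (SNR₀ * B + A * SNR₀) / (A * B) :=
        div_add_div _ _ (ne_of_gt hA) (ne_of_gt hB)
      constructor
      · intro h
        have h2 : (SNR₀ * B + A * SNR₀) / (A * B) < Real.exp Cth - 1 := by
          rw [← hSab]; linarith
        have h3 : SNR₀ * B + A * SNR₀ < (Real.exp Cth - 1) * (A * B) :=
          (div_lt_iff₀ (mul_pos hA hB)).mp h2
        rw [← hβS] at h3
        have := (mul_lt_mul_iff_right₀ hSNR).mp (by linarith : SNR₀ * (A + B) < SNR₀ * (β * (A * B)))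
        exact this
      · intro h
        have h3 : SNR₀ * (A + B) < SNR₀ * (β * (A * B)) := (mul_lt_mul_iff_right₀ hSNR).mpr h
        have h4 : SNR₀ * B + A * SNR₀ < (Real.exp Cth - 1) * (A * B) := by
          rw [← hβS]; linarith
        have h5 := (div_lt_iff₀ (mul_pos hA hB)).mpr h4
        rw [← hSab] at h5
        linarith
    rw [step1]
    set s : ℝ := (v * t - L / 2) ^ 2 with hs
    have hs0 : 0 ≤ s := sq_nonneg _
    have hAB : A + B = 2 * (a + s) := by rw [hA', hB', ha, hs]; ring
    have hABm : A * B = (a + s) ^ 2 - L ^ 2 * s := by rw [hA', hB', ha, hs]; ring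
    have hiden : β * s ^ 2 + c₁ * s + c₀ = β * ((a + s) ^ 2 - L ^ 2 * s) - 2 * (a + s) := by
      rw [hc₁, hc₀]; ring
    have step2 : (A + B < β * (A * B)) ↔ 0 < β * s ^ 2 + c₁ * s + c₀ := by
      rw [hAB, hABm, hiden]
      constructor <;> intro h <;> linarith
    rw [step2]
    have h2βsp : 2 * β * sp = 2 * sd - c₁ := by rw [hsp]; field_simp
    have h2βsm : 2 * β * sm = -c₁ - 2 * sd := by rw [hsm]; field_simp
    have hfac : β * s ^ 2 + c₁ * s + c₀ = β * (s - sp) * (s - sm) := by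
      have hmul : (4 * β) * (β * (s - sp) * (s - sm)) =
          (4 * β) * (β * s ^ 2 + c₁ * s + c₀) := by
        calc (4 * β) * (β * (s - sp) * (s - sm))
            = (2 * β * s - 2 * β * sp) * (2 * β * s - 2 * β * sm) := by ring
          _ = (2 * β * s - (2 * sd - c₁)) * (2 * β * s - (-c₁ - 2 * sd)) := by
              rw [h2βsp, h2βsm]
          _ = (2 * β * s) ^ 2 + 2 * c₁ * (2 * β * s) + (c₁ ^ 2 - 4 * sd ^ 2) := by ring
          _ = (4 * β) * (β * s ^ 2 + c₁ * s + c₀) := by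
              rw [hsd2]; linear_combination (-1 : ℝ) * hdisc
      exact (mul_left_cancel₀ (by positivity : (4 : ℝ) * β ≠ 0) hmul).symm
    have step3 : (0 < β * s ^ 2 + c₁ * s + c₀) ↔ sp < s := by
      rw [hfac]
      constructor
      · intro h
        by_contra hc
        push_neg at hc
        have h5 : 0 ≤ β * (sp - s) * (s - sm) :=
          mul_nonneg (mul_nonneg hβpos.le (by linarith)) (by linarith)
        have h6 : β * (s - sp) * (s - sm) = -(β * (sp - s) * (s - sm)) := by ring
        linarith [h6 ▸ h]
      · intro h
        have := mul_pos (mul_pos hβpos (sub_pos.mpr h)) (sub_pos.mpr (lt_of_lt_of_le hsmneg hs0))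
        linarith [this]
    rw [step3]
    have step4 : (sp < s) ↔ Φ ^ 2 < (2 * (v * t) - L) ^ 2 := by
      rw [hΦ2]
      have h4s : (2 * (v * t) - L) ^ 2 = 4 * s := by rw [hs]; ring
      rw [h4s]
      constructor <;> intro h <;> linarith
    rw [step4, aux_sq_lt_iff Φ _ hΦnn]
    constructor
    · rintro (h | h)
      · left; rw [ht₁, lt_div_iff₀ h2v]; linarith
      · right; rw [ht₂, div_lt_iff₀ h2v]; linarith
    · rintro (h | h)
      · rw [ht₁, lt_div_iff₀ h2v] at h; left; linarith
      · rw [ht₂, div_lt_iff₀ h2v] at h; right; linarith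
  -- interval bookkeeping
  set a' : ℝ := -(D / (2 * v)) with ha'
  set b' : ℝ := D / (2 * v) with hb'
  have ht₁t₂ : t₁ ≤ t₂ := by
    rw [ht₁, ht₂, div_le_div_iff₀ h2v h2v]
    linarith [mul_nonneg hΦnn hv.le]
  have ha't₁ : a' ≤ t₁ := hlo
  have ht₂b' : t₂ ≤ b' := hhi
  have hseteq : {t ∈ Set.Icc a' b' | Real.log (f t L) < Cth} =
      Set.Ico a' t₁ ∪ Set.Ioc t₂ b' := by
    ext t
    simp only [Set.mem_setOf_eq, Set.mem_Icc, Set.mem_union, Set.mem_Ico, Set.mem_Ioc]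
    rw [key t]
    constructor
    · rintro ⟨⟨hx1, hx2⟩, hx3 | hx3⟩
      · exact Or.inl ⟨hx1, hx3⟩
      · exact Or.inr ⟨hx3, hx2⟩
    · rintro (⟨hx1, hx2⟩ | ⟨hx1, hx2⟩)
      · exact ⟨⟨hx1, by linarith⟩, Or.inl hx2⟩
      · exact ⟨⟨by linarith, hx2⟩, Or.inr hx1⟩
  constructor
  · rw [hseteq, measure_union ?hd measurableSet_Ioc]
    case hd =>
      rw [Set.disjoint_left]
      rintro x ⟨_, hx2⟩ ⟨hx3, _⟩
      linarith
    rw [Real.volume_Ico, Real.volume_Ioc, ← ENNReal.ofReal_add (by linarith) (by linarith)]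
    congr 1
    rw [ht₁, ht₂, ha', hb']
    field_simp
    ring
  · have hinner : Real.sqrt (-(β ^ 2) * L ^ 2 * d₀ ^ 2 + β * L ^ 2 + 1) = sd := by
      rw [hsd, hd']
      congr 1
      ring
    have hΦeq : Real.sqrt ((β * L ^ 2 - 4 * β * d₀ ^ 2 +
        4 * Real.sqrt (-(β ^ 2) * L ^ 2 * d₀ ^ 2 + β * L ^ 2 + 1) + 4) / β) = Φ := by
      rw [hΦ, hQ, hΘ, hinner]
      congr 1
      ring
    rw [hΦeq]
    field_simp
end

section
/- Monotonicity of the outage formula in the antenna separation: fix β > 0 with β·d₀² ≤ 1. Then the map L ↦ (β L² − 4 β d₀² + 4·√(β L² − β² L² d₀² + 1) + 4)/β is strictly increasing on (0, ∞); consequently, on any subinterval of (0, ∞) where this quantity is positive, the outage-ratio formula L ↦ 1 − √((β L² − 4 β d₀² + 4·√(β L² − β² L² d₀² + 1) + 4)/β)/D is strictly decreasing. -/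
/-- Monotonicity of the outage formula in the antenna separation: for fixed
`β > 0` with `β·d₀² ≤ 1`, the map
`L ↦ (β L² − 4 β d₀² + 4·√(β L² − β² L² d₀² + 1) + 4)/β` is strictly
increasing on `(0, ∞)`; consequently, on any subset of `(0, ∞)` where this
quantity is positive, the outage-ratio formula
`L ↦ 1 − √((β L² − 4 β d₀² + 4·√(β L² − β² L² d₀² + 1) + 4)/β)/D` is strictly
decreasing. -/
theorem two_antenna_outage_formula_monotone
    (d₀ D β : ℝ) (hd₀ : 0 < d₀) (hD : 0 < D) (hβ : 0 < β)
    (hβd₀ : β * d₀ ^ 2 ≤ 1) :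
    StrictMonoOn
      (fun L : ℝ => (β * L ^ 2 - 4 * β * d₀ ^ 2 +
        4 * Real.sqrt (β * L ^ 2 - β ^ 2 * L ^ 2 * d₀ ^ 2 + 1) + 4) / β)
      (Set.Ioi (0 : ℝ)) ∧
    ∀ s : Set ℝ, s ⊆ Set.Ioi (0 : ℝ) →
      (∀ L ∈ s, 0 < (β * L ^ 2 - 4 * β * d₀ ^ 2 +
        4 * Real.sqrt (β * L ^ 2 - β ^ 2 * L ^ 2 * d₀ ^ 2 + 1) + 4) / β) →
      StrictAntiOn
        (fun L : ℝ => 1 - Real.sqrt ((β * L ^ 2 - 4 * β * d₀ ^ 2 +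
          4 * Real.sqrt (β * L ^ 2 - β ^ 2 * L ^ 2 * d₀ ^ 2 + 1) + 4) / β) / D)
        s := by
  have key : StrictMonoOn
      (fun L : ℝ => (β * L ^ 2 - 4 * β * d₀ ^ 2 +
        4 * Real.sqrt (β * L ^ 2 - β ^ 2 * L ^ 2 * d₀ ^ 2 + 1) + 4) / β)
      (Set.Ioi (0 : ℝ)) := by
    intro x hx y hy hxy
    simp only [Set.mem_Ioi] at hx hy
    have hsq : x ^ 2 < y ^ 2 := by nlinarith
    have h1 : β * x ^ 2 < β * y ^ 2 := by nlinarith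
    have h2 : Real.sqrt (β * x ^ 2 - β ^ 2 * x ^ 2 * d₀ ^ 2 + 1) ≤
        Real.sqrt (β * y ^ 2 - β ^ 2 * y ^ 2 * d₀ ^ 2 + 1) := by
      apply Real.sqrt_le_sqrt
      nlinarith
    have : β * x ^ 2 - 4 * β * d₀ ^ 2 +
        4 * Real.sqrt (β * x ^ 2 - β ^ 2 * x ^ 2 * d₀ ^ 2 + 1) + 4 <
        β * y ^ 2 - 4 * β * d₀ ^ 2 +
        4 * Real.sqrt (β * y ^ 2 - β ^ 2 * y ^ 2 * d₀ ^ 2 + 1) + 4 := by nlinarith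
    exact div_lt_div_of_pos_right this hβ
  refine ⟨key, ?_⟩
  intro s hs hpos x hx y hy hxy
  have h := key (hs hx) (hs hy) hxy
  have := hpos x hx
  have hlt : Real.sqrt ((β * x ^ 2 - 4 * β * d₀ ^ 2 +
      4 * Real.sqrt (β * x ^ 2 - β ^ 2 * x ^ 2 * d₀ ^ 2 + 1) + 4) / β) <
      Real.sqrt ((β * y ^ 2 - 4 * β * d₀ ^ 2 +
      4 * Real.sqrt (β * y ^ 2 - β ^ 2 * y ^ 2 * d₀ ^ 2 + 1) + 4) / β) :=
    Real.sqrt_lt_sqrt (le_of_lt this) h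
  have := div_lt_div_of_pos_right hlt hD
  simp only
  linarith
end
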